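/- Let p_5(1) = (30/π^4) ∫_0^∞ I_0(t)^2 K_0(t)^4 t dt and p_5'(0⁺) = (30/π^4) ∫_0^∞ I_0(t) K_0(t)^4 t dt. Then p_5'(0⁺) < p_5(1); more precisely, p_5(1) - p_5'(0⁺) ≥ (15/(2π^4)) ∫_0^∞ I_0(t) K_0(t)^4 t^3 dt > 0. -/

import Mathlib

open Real MeasureTheory

/-- Modified Bessel function of the first kind, order zero. -/
noncomputable def besselI0 (t : ℝ) : ℝ :=
  (1 / π) * ∫ θ in (0:ℝ)..π, Real.exp (t * Real.cos θ)

/-- Modified Bessel function of the second kind, order zero. -/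
noncomputable def besselK0 (t : ℝ) : ℝ :=
  ∫ u in Set.Ioi (0:ℝ), Real.exp (-t * Real.cosh u)

/-!
Since `I₀(t) ≥ 1 + t²/4` (average `cosh (t cos θ) ≥ 1 + t² cos² θ / 2` over `[0, π]`), the integrand
`I₀ (I₀ - 1) K₀⁴ t` of `p₅(1) - p₅'(0⁺)` dominates `I₀ K₀⁴ t³ / 4` pointwise. The analytic work is
integrability: `t cosh u ≥ 3t/4 + t eᵘ/8` and `e^{-y} ≤ y^{-1/4}` give `K₀(t)⁴ ≤ 2048 e^{-3t} / t`,
which together with `I₀(t) ≤ eᵗ` dominates every integrand by a Gamma integrand `2048 tⁿ e^{-t}`.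
-/

open Set

theorem Real.one_add_sq_div_two_le_cosh (x : ℝ) : 1 + x ^ 2 / 2 ≤ cosh x := by
  have h := sum_le_hasSum (Finset.range 2)
    (fun n _ => div_nonneg ((even_two_mul n).pow_nonneg x) (Nat.cast_nonneg _)) (hasSum_cosh x)
  norm_num [Finset.sum_range_succ] at h
  linarith

lemma integral_exp_mul_cos_eq_integral_cosh (t : ℝ) :
    ∫ θ in (0:ℝ)..π, exp (t * cos θ) = ∫ θ in (0:ℝ)..π, cosh (t * cos θ) := by
  have hreflect : ∫ θ in (0:ℝ)..π, exp (-(t * cos θ)) = ∫ θ in (0:ℝ)..π, exp (t * cos θ) := by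
    simpa [cos_pi_sub] using
      intervalIntegral.integral_comp_sub_left (fun θ => exp (t * cos θ)) π (a := 0) (b := π)
  simp_rw [cosh_eq, intervalIntegral.integral_div]
  rw [intervalIntegral.integral_add ((by fun_prop : Continuous _).intervalIntegrable _ _)
    ((by fun_prop : Continuous _).intervalIntegrable _ _), hreflect]
  ring

lemma one_add_sq_div_four_le_besselI0 (t : ℝ) : 1 + t ^ 2 / 4 ≤ besselI0 t := by
  have hmono : ∫ θ in (0:ℝ)..π, (1 + t ^ 2 / 2 * cos θ ^ 2) ≤ ∫ θ in (0:ℝ)..π, cosh (t * cos θ) :=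
    intervalIntegral.integral_mono_on pi_pos.le
      ((by fun_prop : Continuous _).intervalIntegrable _ _)
      ((by fun_prop : Continuous _).intervalIntegrable _ _) fun θ _ => by
        convert one_add_sq_div_two_le_cosh (t * cos θ) using 2; ring
  have hquad : ∫ θ in (0:ℝ)..π, (1 + t ^ 2 / 2 * cos θ ^ 2) = π * (1 + t ^ 2 / 4) := by
    rw [intervalIntegral.integral_add intervalIntegrable_const
      ((by fun_prop : Continuous _).intervalIntegrable _ _),
      intervalIntegral.integral_const_mul, integral_cos_sq]
    simp
    ring
  rw [besselI0, integral_exp_mul_cos_eq_integral_cosh, one_div, inv_mul_eq_div,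
    le_div_iff₀ pi_pos]
  linarith

lemma one_le_besselI0 (t : ℝ) : 1 ≤ besselI0 t := by
  nlinarith [one_add_sq_div_four_le_besselI0 t]

lemma besselI0_le_exp {t : ℝ} (ht : 0 ≤ t) : besselI0 t ≤ exp t := by
  have hmono : ∫ θ in (0:ℝ)..π, exp (t * cos θ) ≤ ∫ _ in (0:ℝ)..π, exp t :=
    intervalIntegral.integral_mono_on pi_pos.le
      ((by fun_prop : Continuous _).intervalIntegrable _ _) intervalIntegrable_const
      fun θ _ => exp_le_exp.2 (by nlinarith [cos_le_one θ])
  rw [intervalIntegral.integral_const, smul_eq_mul, sub_zero] at hmono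
  rw [besselI0, one_div, inv_mul_eq_div, div_le_iff₀ pi_pos]
  linarith

lemma stronglyMeasurable_besselI0 : StronglyMeasurable besselI0 := by
  have h : StronglyMeasurable fun t => ∫ θ in Ioc 0 π, exp (t * cos θ) :=
    StronglyMeasurable.integral_prod_right
      (by fun_prop : Continuous fun p : ℝ × ℝ => exp (p.1 * cos p.2)).stronglyMeasurable
  change StronglyMeasurable fun t => besselI0 t
  simp_rw [besselI0, intervalIntegral.integral_of_le pi_pos.le]
  exact h.const_mul _

lemma stronglyMeasurable_besselK0 : StronglyMeasurable besselK0 :=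
  StronglyMeasurable.integral_prod_right
    (by fun_prop : Continuous fun p : ℝ × ℝ => exp (-p.1 * cosh p.2)).stronglyMeasurable

lemma rpow_inv_four_le_exp {y : ℝ} (hy : 0 ≤ y) : y ^ (4⁻¹ : ℝ) ≤ exp y := by
  calc y ^ (4⁻¹ : ℝ) ≤ exp y ^ (4⁻¹ : ℝ) :=
        rpow_le_rpow hy (by linarith [add_one_le_exp y]) (by norm_num)
    _ = exp (y / 4) := by rw [← exp_mul]; ring_nf
    _ ≤ exp y := exp_le_exp.2 (by linarith)

lemma exp_neg_mul_cosh_le {t : ℝ} (ht : 0 < t) (u : ℝ) :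
    exp (-t * cosh u) ≤ exp (-(3 / 4) * t) * exp (-4⁻¹ * u) / (t / 8) ^ (4⁻¹ : ℝ) := by
  set y := t / 8 * exp u with hy_def
  have hsplit : exp (-t * cosh u) ≤ exp (-(3 / 4) * t) * exp (-y) := by
    rw [← exp_add]
    refine exp_le_exp.2 ?_
    have h1 := one_le_cosh u
    have h2 : exp u / 2 ≤ cosh u := by rw [cosh_eq]; linarith [exp_pos (-u)]
    nlinarith [mul_le_mul_of_nonneg_left h1 ht.le, mul_le_mul_of_nonneg_left h2 ht.le]
  have hroot : y ^ (4⁻¹ : ℝ) = (t / 8) ^ (4⁻¹ : ℝ) * exp (4⁻¹ * u) := by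
    rw [mul_rpow (by positivity) (exp_pos u).le, ← exp_mul]; ring_nf
  have hy : exp (-y) ≤ exp (-4⁻¹ * u) / (t / 8) ^ (4⁻¹ : ℝ) := by
    rw [exp_neg, neg_mul, exp_neg, ← one_div, inv_eq_one_div, div_div, mul_comm (exp _), ← hroot,
      div_le_div_iff₀ (exp_pos y) (by positivity)]
    simpa using rpow_inv_four_le_exp (by positivity : 0 ≤ y)
  calc exp (-t * cosh u) ≤ exp (-(3 / 4) * t) * exp (-y) := hsplit
    _ ≤ _ := by rw [mul_div_assoc]; gcongr

lemma setIntegral_pos_of_forall_pos {X : Type*} [MeasurableSpace X] {μ : Measure X} {s : Set X}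
    {f : X → ℝ} (hs : MeasurableSet s) (hμs : 0 < μ s) (hf : IntegrableOn f s μ)
    (hpos : ∀ x ∈ s, 0 < f x) : 0 < ∫ x in s, f x ∂μ := by
  rw [setIntegral_pos_iff_support_of_nonneg_ae
    ((ae_restrict_mem hs).mono fun x hx => (hpos x hx).le) hf]
  exact hμs.trans_le (measure_mono fun x hx => ⟨(hpos x hx).ne', hx⟩)

lemma integrableOn_exp_neg_mul_cosh {t : ℝ} (ht : 0 < t) :
    IntegrableOn (fun u => exp (-t * cosh u)) (Ioi 0) := by
  refine Integrable.mono' (((integrableOn_exp_mul_Ioi (by norm_num : -(4:ℝ)⁻¹ < 0) 0).const_mul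
    (exp (-(3 / 4) * t))).div_const ((t / 8) ^ (4⁻¹ : ℝ)))
    (by fun_prop) (Filter.Eventually.of_forall fun u => ?_)
  rw [norm_of_nonneg (exp_pos _).le]
  exact exp_neg_mul_cosh_le ht u

lemma besselK0_pos {t : ℝ} (ht : 0 < t) : 0 < besselK0 t :=
  setIntegral_pos_of_forall_pos measurableSet_Ioi (by simp) (integrableOn_exp_neg_mul_cosh ht)
    fun _ _ => exp_pos _

lemma besselK0_le {t : ℝ} (ht : 0 < t) :
    besselK0 t ≤ 4 * exp (-(3 / 4) * t) / (t / 8) ^ (4⁻¹ : ℝ) := by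
  have hbound : IntegrableOn (fun u => exp (-(3 / 4) * t) * exp (-4⁻¹ * u) / (t / 8) ^ (4⁻¹ : ℝ))
      (Ioi 0) := ((integrableOn_exp_mul_Ioi (by norm_num : -(4:ℝ)⁻¹ < 0) 0).const_mul
    (exp (-(3 / 4) * t))).div_const ((t / 8) ^ (4⁻¹ : ℝ))
  calc besselK0 t ≤ ∫ u in Ioi 0, exp (-(3 / 4) * t) * exp (-4⁻¹ * u) / (t / 8) ^ (4⁻¹ : ℝ) :=
        setIntegral_mono_on (integrableOn_exp_neg_mul_cosh ht) hbound measurableSet_Ioi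
          fun u _ => exp_neg_mul_cosh_le ht u
    _ = 4 * exp (-(3 / 4) * t) / (t / 8) ^ (4⁻¹ : ℝ) := by
        rw [integral_div, integral_const_mul, integral_exp_mul_Ioi (by norm_num)]
        norm_num
        ring

lemma besselK0_pow_four_le {t : ℝ} (ht : 0 < t) : besselK0 t ^ 4 ≤ 2048 * exp (-3 * t) / t := by
  have hroot : ((t / 8) ^ (4⁻¹ : ℝ)) ^ 4 = t / 8 := by
    simpa using rpow_inv_natCast_pow (by positivity : 0 ≤ t / 8) (by norm_num : 4 ≠ 0)
  calc besselK0 t ^ 4 ≤ (4 * exp (-(3 / 4) * t) / (t / 8) ^ (4⁻¹ : ℝ)) ^ 4 :=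
        pow_le_pow_left₀ (besselK0_pos ht).le (besselK0_le ht) 4
    _ = 2048 * exp (-3 * t) / t := by
        rw [div_pow, hroot, mul_pow, ← exp_nat_mul]
        field_simp
        ring_nf

lemma besselI0_pow_mul_besselK0_pow_four_le {a : ℕ} (ha : a ≤ 2) {t : ℝ} (ht : 0 < t) :
    besselI0 t ^ a * besselK0 t ^ 4 ≤ 2048 * exp (-t) / t := by
  have hI : besselI0 t ^ a ≤ exp (2 * t) :=
    calc besselI0 t ^ a ≤ besselI0 t ^ 2 := pow_le_pow_right₀ (one_le_besselI0 t) ha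
      _ ≤ exp t ^ 2 := pow_le_pow_left₀ (by linarith [one_le_besselI0 t]) (besselI0_le_exp ht.le) 2
      _ = exp (2 * t) := by rw [← exp_nat_mul]; norm_num
  calc besselI0 t ^ a * besselK0 t ^ 4 ≤ exp (2 * t) * (2048 * exp (-3 * t) / t) :=
        mul_le_mul hI (besselK0_pow_four_le ht) (by positivity) (exp_pos _).le
    _ = 2048 * exp (-t) / t := by
        rw [mul_div_assoc', mul_left_comm, ← exp_add]; ring_nf

lemma integrableOn_besselI0_pow_mul_besselK0_pow_four_mul_pow {a : ℕ} (ha : a ≤ 2) (n : ℕ) :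
    IntegrableOn (fun t => besselI0 t ^ a * besselK0 t ^ 4 * t ^ (n + 1)) (Ioi 0) := by
  have hgamma : IntegrableOn (fun t => 2048 * (exp (-t) * t ^ n)) (Ioi 0) := by
    simpa [IntegrableOn] using
      (GammaIntegral_convergent (by positivity : (0:ℝ) < n + 1)).const_mul 2048
  refine Integrable.mono' hgamma
    (((stronglyMeasurable_besselI0.pow a).mul (stronglyMeasurable_besselK0.pow 4)).mul
      (by fun_prop : Continuous fun t : ℝ => t ^ (n + 1)).stronglyMeasurable).aestronglyMeasurable
    ((ae_restrict_mem measurableSet_Ioi).mono fun t (ht : 0 < t) => ?_)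
  have hI := one_le_besselI0 t
  rw [norm_of_nonneg (by positivity)]
  calc besselI0 t ^ a * besselK0 t ^ 4 * t ^ (n + 1) ≤ 2048 * exp (-t) / t * t ^ (n + 1) :=
        mul_le_mul_of_nonneg_right (besselI0_pow_mul_besselK0_pow_four_le ha ht) (by positivity)
    _ = 2048 * (exp (-t) * t ^ n) := by field_simp; ring

lemma integral_besselI0_pow_mul_besselK0_pow_four_mul_pow_pos {a : ℕ} (ha : a ≤ 2) (n : ℕ) :
    0 < ∫ t in Ioi 0, besselI0 t ^ a * besselK0 t ^ 4 * t ^ (n + 1) :=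
  setIntegral_pos_of_forall_pos measurableSet_Ioi (by simp)
    (integrableOn_besselI0_pow_mul_besselK0_pow_four_mul_pow ha n) fun t (ht : 0 < t) => by
      have := one_le_besselI0 t
      have := besselK0_pos ht
      positivity

lemma besselI0_mul_besselK0_pow_four_mul_cube_le {t : ℝ} (ht : 0 ≤ t) :
    4⁻¹ * (besselI0 t * besselK0 t ^ 4 * t ^ 3) ≤
      besselI0 t ^ 2 * besselK0 t ^ 4 * t - besselI0 t * besselK0 t ^ 4 * t := by
  have hI := one_add_sq_div_four_le_besselI0 t
  have hnonneg : 0 ≤ besselI0 t * besselK0 t ^ 4 * t := by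
    have := one_le_besselI0 t
    positivity
  nlinarith [mul_le_mul_of_nonneg_left hI hnonneg]

theorem stmt_12
    (p51 p5'0 : ℝ)
    (h1 : p51 = (30 / π^4) * ∫ t in Set.Ioi (0:ℝ),
      (besselI0 t)^2 * (besselK0 t)^4 * t)
    (h0 : p5'0 = (30 / π^4) * ∫ t in Set.Ioi (0:ℝ),
      besselI0 t * (besselK0 t)^4 * t) :
    p5'0 < p51 ∧
    p51 - p5'0 ≥ (15 / (2 * π^4)) *
      ∫ t in Set.Ioi (0:ℝ), besselI0 t * (besselK0 t)^4 * t^3 ∧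
    0 < (15 / (2 * π^4)) *
      ∫ t in Set.Ioi (0:ℝ), besselI0 t * (besselK0 t)^4 * t^3 := by
  have hint_sq := integrableOn_besselI0_pow_mul_besselK0_pow_four_mul_pow le_rfl 0
  have hint := integrableOn_besselI0_pow_mul_besselK0_pow_four_mul_pow one_le_two 0
  have hint_cube := integrableOn_besselI0_pow_mul_besselK0_pow_four_mul_pow one_le_two 2
  have hpos := integral_besselI0_pow_mul_besselK0_pow_four_mul_pow_pos one_le_two 2
  simp only [pow_one, zero_add, Nat.reduceAdd] at hint_sq hint hint_cube hpos
  have hgap : p51 - p5'0 ≥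
      (15 / (2 * π^4)) * ∫ t in Ioi 0, besselI0 t * besselK0 t ^ 4 * t ^ 3 := by
    rw [ge_iff_le, h1, h0, ← mul_sub, ← integral_sub hint_sq hint,
      show 15 / (2 * π ^ 4) = 30 / π ^ 4 * 4⁻¹ by ring, mul_assoc, ← integral_const_mul]
    refine mul_le_mul_of_nonneg_left ?_ (by positivity)
    exact setIntegral_mono_on (hint_cube.const_mul _) (hint_sq.sub hint) measurableSet_Ioi
      fun t ht => besselI0_mul_besselK0_pow_four_mul_cube_le (le_of_lt ht)
  have hC : 0 < (15 / (2 * π^4)) * ∫ t in Ioi 0, besselI0 t * besselK0 t ^ 4 * t ^ 3 := by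
    positivity
  exact ⟨by linarith, hgap, hC⟩
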